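/- Let (G_n, δ_n)_{n∈ℕ} be a sequence of proper metric groups such that for every n ∈ ℕ the metric δ_n is bi-invariant (both left- and right-invariant), and suppose the sequence is Cauchy for the Gromov-Hausdorff monoid distance Υ. Then there exists a proper metric group (G, δ) such that lim_{n→∞} Υ((G_n,δ_n),(G,δ)) = 0. -/

import Mathlib

/-- `(ς, κ)` is an `r`-local `ε`-almost isometric isomorphism between the metric
monoids `G` and `H`. -/
def IsLocAlmostIsoIso {G H : Type*} [Monoid G] [MetricSpace G] [Monoid H] [MetricSpace H]
    (ς : G → H) (κ : H → G) (ε r : ℝ) : Prop :=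
  ς 1 = 1 ∧ κ 1 = 1 ∧
    (∀ g ∈ Metric.closedBall (1 : G) r, ∀ g' ∈ Metric.closedBall (1 : G) r,
      ∀ h ∈ Metric.closedBall (1 : H) r,
        |dist (ς g * ς g') h - dist (g * g') (κ h)| ≤ ε) ∧
    (∀ g ∈ Metric.closedBall (1 : H) r, ∀ g' ∈ Metric.closedBall (1 : H) r,
      ∀ h ∈ Metric.closedBall (1 : G) r,
        |dist (κ g * κ g') h - dist (g * g') (ς h)| ≤ ε)
/-- The Gromov-Hausdorff monoid distance `Υ` between two (proper) metric monoids: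
`min {√2/2, inf {ε > 0 : ∃ a (1/ε)-local ε-almost isometric isomorphism}}`. -/
noncomputable def Upsilon (G H : Type*) [Monoid G] [MetricSpace G] [Monoid H]
    [MetricSpace H] : ℝ :=
  sInf ({ε : ℝ | 0 < ε ∧ ∃ (ς : G → H) (κ : H → G), IsLocAlmostIsoIso ς κ ε (1 / ε)} ∪
    {Real.sqrt 2 / 2})

/-!
The limit is a metric ultraproduct. Fix a non-principal ultrafilter `U` on `ℕ`. By bi-invariance,
`δ(xy, 1) ≤ δ(x, 1) + δ(y, 1)` and `δ(x⁻¹, 1) = δ(x, 1)`, so the sequences `(xₙ)` with `δₙ(xₙ, 1)`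
bounded along `U` form a group, on which `lim_U δₙ(xₙ, yₙ)` is a bi-invariant pseudometric; its
separation quotient `H` is a metric group, complete because `U` is countably incomplete.
If `Υ(X, Gₘ) < η` for `U`-almost all `m`, the `U`-limits of the almost isometric isomorphisms
`X ⇄ Gₘ` form an `η`-almost isometric isomorphism `X ⇄ H`; the map into `X` exists because `X` is
proper. Taking `X = Gₙ` for large `n`, the balls of `H` are totally bounded, so `H` is proper, and
`Υ(Gₙ, H) → 0`.
-/

open Filter Metric Topology

section AlmostIso

variable {X Y : Type*} [Monoid X] [MetricSpace X] [Monoid Y] [MetricSpace Y]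
  {ς : X → Y} {κ : Y → X} {ε r : ℝ}

theorem IsLocAlmostIsoIso.mono (h : IsLocAlmostIsoIso ς κ ε r) {ε' r' : ℝ} (hε : ε ≤ ε')
    (hr : r' ≤ r) : IsLocAlmostIsoIso ς κ ε' r' := by
  have hX := closedBall_subset_closedBall (x := (1 : X)) hr
  have hY := closedBall_subset_closedBall (x := (1 : Y)) hr
  exact ⟨h.1, h.2.1, fun g hg g' hg' y hy => (h.2.2.1 g (hX hg) g' (hX hg') y (hY hy)).trans hε,
    fun g hg g' hg' x hx => (h.2.2.2 g (hY hg) g' (hY hg') x (hX hx)).trans hε⟩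

theorem IsLocAlmostIsoIso.symm (h : IsLocAlmostIsoIso ς κ ε r) : IsLocAlmostIsoIso κ ς ε r :=
  ⟨h.2.1, h.1, h.2.2.2, h.2.2.1⟩

theorem IsLocAlmostIsoIso.abs_dist_sub_le (h : IsLocAlmostIsoIso ς κ ε r) {x : X}
    (hx : x ∈ closedBall 1 r) {y : Y} (hy : y ∈ closedBall 1 r) :
    |dist (ς x) y - dist x (κ y)| ≤ ε := by
  have hr : 0 ≤ r := dist_nonneg.trans hx
  simpa [h.1] using h.2.2.1 x hx 1 (mem_closedBall_self hr) y hy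

theorem IsLocAlmostIsoIso.abs_dist_one_sub_le (h : IsLocAlmostIsoIso ς κ ε r) {x : X}
    (hx : x ∈ closedBall 1 r) : |dist (ς x) 1 - dist x 1| ≤ ε := by
  simpa [h.2.1] using h.abs_dist_sub_le hx (mem_closedBall_self (dist_nonneg.trans hx))

theorem IsLocAlmostIsoIso.exists_finite_cover [ProperSpace X] (h : IsLocAlmostIsoIso ς κ ε r)
    (hε : 0 < ε) {s : ℝ} (hs : s + ε ≤ r) :
    ∃ t : Set Y, t.Finite ∧ closedBall (1 : Y) s ⊆ ⋃ y ∈ t, ball y (2 * ε) := by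
  obtain ⟨t, hts, ht, hcover⟩ :=
    finite_cover_balls_of_compact (isCompact_closedBall (1 : X) (s + ε)) hε
  refine ⟨ς '' t, ht.image ς, fun y hy => ?_⟩
  have hyr : y ∈ closedBall (1 : Y) r := closedBall_subset_closedBall (by linarith) hy
  have hκy := abs_le.1 (h.symm.abs_dist_one_sub_le hyr)
  obtain ⟨x, hxt, hx⟩ := Set.mem_iUnion₂.1 (hcover (mem_closedBall.2 (by
    linarith [mem_closedBall.1 hy] : dist (κ y) 1 ≤ s + ε)))
  have hxr : x ∈ closedBall (1 : X) r := closedBall_subset_closedBall hs (hts hxt)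
  have hxy := abs_le.1 (h.symm.abs_dist_sub_le hyr hxr)
  refine Set.mem_biUnion (Set.mem_image_of_mem ς hxt) (mem_ball.2 ?_)
  linarith [mem_ball.1 hx]

theorem zero_mem_lowerBounds_upsilon_set : (0 : ℝ) ∈ lowerBounds
    ({ε : ℝ | 0 < ε ∧ ∃ (ς : X → Y) (κ : Y → X), IsLocAlmostIsoIso ς κ ε (1 / ε)} ∪ {√2 / 2}) := by
  rintro x (hx | rfl)
  exacts [hx.1.le, by positivity]

theorem upsilon_nonneg : 0 ≤ Upsilon X Y :=
  Real.sInf_nonneg zero_mem_lowerBounds_upsilon_set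

theorem upsilon_le_of_isLocAlmostIsoIso (hε : 0 < ε) (h : IsLocAlmostIsoIso ς κ ε (1 / ε)) :
    Upsilon X Y ≤ ε :=
  csInf_le ⟨0, zero_mem_lowerBounds_upsilon_set⟩ (Or.inl ⟨hε, ς, κ, h⟩)

theorem exists_isLocAlmostIsoIso_of_upsilon_lt (hε : ε ≤ √2 / 2)
    (h : Upsilon X Y < ε) : ∃ (ς : X → Y) (κ : Y → X), IsLocAlmostIsoIso ς κ ε (1 / ε) := by
  obtain ⟨δ, hδ | rfl, hδε⟩ :=
    (csInf_lt_iff ⟨0, zero_mem_lowerBounds_upsilon_set⟩ ⟨_, Or.inr rfl⟩).1 h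
  · obtain ⟨hδ, ς, κ, h⟩ := hδ
    exact ⟨ς, κ, h.mono hδε.le (one_div_le_one_div_of_le hδ hδε.le)⟩
  · exact absurd hε hδε.not_ge

end AlmostIso

section Biinvariant

variable {M : Type*} [Group M] [PseudoMetricSpace M] [IsIsometricSMul M M] [IsIsometricSMul Mᵐᵒᵖ M]

theorem dist_mul_mul_le_of_isIsometricSMul (a b c d : M) :
    dist (a * b) (c * d) ≤ dist a c + dist b d :=
  calc dist (a * b) (c * d) ≤ dist (a * b) (c * b) + dist (c * b) (c * d) := dist_triangle _ _ _
    _ = dist a c + dist b d := by rw [dist_mul_right, dist_mul_left]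

instance IsIsometricSMul.to_isTopologicalGroup : IsTopologicalGroup M where
  continuous_mul := (LipschitzWith.of_dist_le_mul (K := 2) fun p q => by
    have := dist_mul_mul_le_of_isIsometricSMul p.1 p.2 q.1 q.2
    have h1 : dist p.1 q.1 ≤ dist p q := le_max_left _ _
    have h2 : dist p.2 q.2 ≤ dist p q := le_max_right _ _
    push_cast; linarith).continuous
  continuous_inv := isometry_inv.continuous

end Biinvariant

theorem ProperSpace.of_totallyBounded_closedBall_one {M : Type*} [Group M] [PseudoMetricSpace M]
    [IsIsometricSMul M M] [CompleteSpace M]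
    (h : ∀ r, 0 ≤ r → TotallyBounded (closedBall (1 : M) r)) :
    ProperSpace M :=
  .of_isCompact_closedBall_of_le 0 fun x r hr => by
    simpa [Metric.smul_closedBall] using ((h r hr).isCompact_of_isClosed isClosed_closedBall).smul x

theorem Ultrafilter.tendsto_limUnder_of_eventually_mem_closedBall {ι X : Type*}
    [PseudoMetricSpace X] [ProperSpace X] [Nonempty X] (U : Ultrafilter ι) {f : ι → X} {x : X}
    {r : ℝ} (h : ∀ᶠ i in U, f i ∈ closedBall x r) : Tendsto f U (𝓝 (limUnder U f)) := by
  obtain ⟨y, -, hy⟩ := (isCompact_closedBall x r).ultrafilter_le_nhds (U.map f)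
    (by rwa [le_principal_iff, Ultrafilter.mem_coe, Ultrafilter.mem_map])
  exact tendsto_nhds_limUnder ⟨y, hy⟩

section Ultraproduct

variable {ι : Type*} (G : ι → Type*) [∀ i, Group (G i)] [∀ i, PseudoMetricSpace (G i)]
  [∀ i, IsIsometricSMul (G i) (G i)] [∀ i, IsIsometricSMul (G i)ᵐᵒᵖ (G i)]

def boundedSubgroup (U : Filter ι) : Subgroup (∀ i, G i) where
  carrier := {x | ∃ C, ∀ᶠ i in U, dist (x i) 1 ≤ C}
  one_mem' := ⟨0, .of_forall fun i => (dist_self _).le⟩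
  mul_mem' := by
    rintro x y ⟨C, hC⟩ ⟨D, hD⟩
    refine ⟨C + D, (hC.and hD).mono fun i hi => ?_⟩
    simpa using (dist_mul_mul_le_of_isIsometricSMul (x i) (y i) 1 1).trans (add_le_add hi.1 hi.2)
  inv_mem' := by
    rintro x ⟨C, hC⟩
    exact ⟨C, hC.mono fun i hi => by rwa [Pi.inv_apply, ← inv_one, dist_inv_inv]⟩

/-- A type synonym, so that the pseudometric below does not clash with the topology of the
product. -/
def BddSeq (U : Ultrafilter ι) : Type _ := boundedSubgroup G U

namespace BddSeq

variable {G} {U : Ultrafilter ι}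

instance : Group (BddSeq G U) := inferInstanceAs (Group (boundedSubgroup G U))

instance : CoeFun (BddSeq G U) (fun _ => ∀ i, G i) :=
  ⟨fun x => Subtype.val (p := (· ∈ boundedSubgroup G U)) x⟩

def mk (x : ∀ i, G i) (hx : x ∈ boundedSubgroup G U) : BddSeq G U := ⟨x, hx⟩

@[simp] theorem mul_apply (x y : BddSeq G U) (i : ι) : (x * y) i = x i * y i := rfl

noncomputable instance : Dist (BddSeq G U) :=
  ⟨fun x y => limUnder U fun i => dist (x i) (y i)⟩

theorem tendsto_dist (x y : BddSeq G U) :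
    Tendsto (fun i => dist (x i) (y i)) U (𝓝 (dist x y)) := by
  obtain ⟨C, hC⟩ := x.2
  obtain ⟨D, hD⟩ := y.2
  refine U.tendsto_limUnder_of_eventually_mem_closedBall (x := 0) (r := C + D) ?_
  filter_upwards [hC, hD] with i hxi hyi
  rw [mem_closedBall, Real.dist_0_eq_abs, abs_of_nonneg dist_nonneg]
  exact (dist_triangle_right _ _ 1).trans (add_le_add hxi hyi)

noncomputable instance : PseudoMetricSpace (BddSeq G U) where
  dist_self x := tendsto_nhds_unique (tendsto_dist x x) (by simp)
  dist_comm x y :=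
    tendsto_nhds_unique (tendsto_dist x y) (by simpa [dist_comm] using tendsto_dist y x)
  dist_triangle x y z := le_of_tendsto_of_tendsto' (tendsto_dist x z)
    ((tendsto_dist x y).add (tendsto_dist y z)) fun _ => dist_triangle _ _ _

instance : IsIsometricSMul (BddSeq G U) (BddSeq G U) :=
  ⟨fun x => .of_dist_eq fun y z => tendsto_nhds_unique (tendsto_dist _ _)
    (by simpa [dist_mul_left] using tendsto_dist y z)⟩

instance : IsIsometricSMul (BddSeq G U)ᵐᵒᵖ (BddSeq G U) :=
  ⟨fun x => .of_dist_eq fun y z => tendsto_nhds_unique (tendsto_dist _ _)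
    (by simpa [dist_mul_right] using tendsto_dist y z)⟩

theorem completeSpace {φ : ι → ℕ} (hφ : Tendsto φ U atTop) : CompleteSpace (BddSeq G U) := by
  classical
  refine Metric.complete_of_convergent_controlled_sequences (fun k => (1 / 2) ^ k)
    (fun k => by positivity) fun u hu => ?_
  set A : ℕ → Set ι := fun j => {i | ∀ k ≤ j, dist (u k i) (u j i) < (1 / 2) ^ k}
  have hA : ∀ j, ∀ᶠ i in U, i ∈ A j := fun j => (Set.finite_le_nat j).eventually_all.2 fun k hk =>
    (tendsto_dist (u k) (u j)).eventually_lt_const (hu k k j le_rfl hk)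
  -- The limit is diagonal: at index `i` it takes the `d i`-th term, `d i ≤ φ i` being the largest
  -- `j` with `i ∈ A j`; then `d → ∞` along `U`, and `i ∈ A (d i)` keeps each `u k i` close to it.
  set d : ι → ℕ := fun i => Nat.findGreatest (fun j => i ∈ A j) (φ i)
  have hd : ∀ i, i ∈ A (d i) := fun i =>
    Nat.findGreatest_spec (P := fun j => i ∈ A j) (Nat.zero_le _) fun k hk => by
      rw [Nat.le_zero.1 hk, dist_self]; norm_num
  have hd_ge : ∀ k, ∀ᶠ i in U, k ≤ d i := fun k =>
    (hφ.eventually_ge_atTop k).mp <| (hA k).mono fun i hi hk => Nat.le_findGreatest hk hi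
  have hy : (fun i => u (d i) i) ∈ boundedSubgroup G U := by
    obtain ⟨C, hC⟩ := (u 0).2
    refine ⟨1 + C, hC.mono fun i hi => ?_⟩
    have := hd i 0 (Nat.zero_le _)
    calc dist (u (d i) i) 1 ≤ dist (u 0 i) (u (d i) i) + dist (u 0 i) 1 := dist_triangle_left _ _ _
      _ ≤ 1 + C := by gcongr; simpa using this.le
  refine ⟨⟨_, hy⟩, tendsto_iff_dist_tendsto_zero.2 <| squeeze_zero (fun _ => dist_nonneg)
    (fun k => le_of_tendsto (tendsto_dist _ _) ((hd_ge k).mono fun i hk => (hd i k hk).le))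
    (tendsto_pow_atTop_nhds_zero_of_lt_one (by norm_num) (by norm_num))⟩

end BddSeq

abbrev MetricUltraproduct (U : Ultrafilter ι) : Type _ := SeparationQuotient (BddSeq G U)

namespace MetricUltraproduct

variable {G} {U : Ultrafilter ι}

open SeparationQuotient

open Classical in
/-- Unbounded sequences are sent to `1`. -/
noncomputable def ofSeq (x : ∀ i, G i) : MetricUltraproduct G U :=
  if hx : x ∈ boundedSubgroup G U then mk (BddSeq.mk x hx) else 1

theorem ofSeq_of_mem {x : ∀ i, G i} (hx : x ∈ boundedSubgroup G U) :
    (ofSeq x : MetricUltraproduct G U) = mk (BddSeq.mk x hx) := dif_pos hx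

theorem ofSeq_one : (ofSeq 1 : MetricUltraproduct G U) = 1 := ofSeq_of_mem (one_mem _)

theorem ofSeq_mul {x y : ∀ i, G i} (hx : x ∈ boundedSubgroup G U) (hy : y ∈ boundedSubgroup G U) :
    (ofSeq (x * y) : MetricUltraproduct G U) = ofSeq x * ofSeq y := by
  rw [ofSeq_of_mem hx, ofSeq_of_mem hy, ofSeq_of_mem (mul_mem hx hy)]
  rfl

theorem tendsto_dist_ofSeq {x y : ∀ i, G i} (hx : x ∈ boundedSubgroup G U)
    (hy : y ∈ boundedSubgroup G U) :
    Tendsto (fun i => dist (x i) (y i)) U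
      (𝓝 (dist (ofSeq x : MetricUltraproduct G U) (ofSeq y))) := by
  rw [ofSeq_of_mem hx, ofSeq_of_mem hy, dist_mk]
  exact BddSeq.tendsto_dist _ _

theorem exists_ofSeq_eq (c : MetricUltraproduct G U) :
    ∃ x ∈ boundedSubgroup G U, ofSeq x = c := by
  obtain ⟨x, rfl⟩ := surjective_mk c
  exact ⟨x, x.2, ofSeq_of_mem x.2⟩

open Classical in
/-- Normalised at `1`, so that the ultralimit map `c ↦ lim_U τᵢ (out c i)` of
`isLocAlmostIsoIso_ultralimit` fixes `1`. -/
noncomputable def out (c : MetricUltraproduct G U) : ∀ i, G i :=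
  if c = 1 then 1 else (exists_ofSeq_eq c).choose

theorem out_one : out (1 : MetricUltraproduct G U) = 1 := if_pos rfl

theorem out_mem (c : MetricUltraproduct G U) : out c ∈ boundedSubgroup G U := by
  unfold out; split_ifs
  exacts [one_mem _, (exists_ofSeq_eq c).choose_spec.1]

theorem ofSeq_out (c : MetricUltraproduct G U) : ofSeq (out c) = c := by
  unfold out; split_ifs with h
  exacts [h ▸ ofSeq_one, (exists_ofSeq_eq c).choose_spec.2]

theorem eventually_out_mem_closedBall {c : MetricUltraproduct G U} {r R : ℝ}
    (hc : c ∈ closedBall 1 r) (hr : r < R) : ∀ᶠ i in U, out c i ∈ closedBall 1 R := by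
  have h := tendsto_dist_ofSeq (out_mem c) (one_mem _)
  rw [ofSeq_out, ofSeq_one] at h
  exact h.eventually_le_const (lt_of_le_of_lt hc hr)

instance : IsIsometricSMul (MetricUltraproduct G U) (MetricUltraproduct G U) :=
  ⟨surjective_mk.forall.2 fun c => Isometry.of_dist_eq <| surjective_mk.forall₂.2 fun x y => by
    simp only [smul_eq_mul, ← mk_mul, dist_mk, dist_mul_left]⟩

end MetricUltraproduct

end Ultraproduct

section Ultralimit

variable {ι X : Type*} [Monoid X] [MetricSpace X] {G : ι → Type*} [∀ i, Group (G i)]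
  [∀ i, MetricSpace (G i)] [∀ i, IsIsometricSMul (G i) (G i)] [∀ i, IsIsometricSMul (G i)ᵐᵒᵖ (G i)]
  {U : Ultrafilter ι} {σ : ∀ i, X → G i} {τ : ∀ i, G i → X} {η R : ℝ}

open MetricUltraproduct

theorem map_mem_boundedSubgroup (h : ∀ᶠ i in U, IsLocAlmostIsoIso (σ i) (τ i) η R) {g : X}
    (hg : g ∈ closedBall 1 R) : (fun i => σ i g) ∈ boundedSubgroup G U :=
  ⟨R + η, h.mono fun i hi => by
    linarith [(abs_le.1 (hi.abs_dist_one_sub_le hg)).2, mem_closedBall.1 hg]⟩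

theorem tendsto_limUnder_map_out [ProperSpace X]
    (h : ∀ᶠ i in U, IsLocAlmostIsoIso (σ i) (τ i) η R) {c : MetricUltraproduct G U} {r : ℝ}
    (hc : c ∈ closedBall 1 r) (hr : r < R) :
    Tendsto (fun i => τ i (out c i)) U (𝓝 (limUnder U fun i => τ i (out c i))) := by
  refine U.tendsto_limUnder_of_eventually_mem_closedBall (x := 1) (r := R + η) ?_
  filter_upwards [h, eventually_out_mem_closedBall hc hr] with i hi hci
  rw [mem_closedBall]
  linarith [(abs_le.1 (hi.symm.abs_dist_one_sub_le hci)).2, mem_closedBall.1 hci]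

theorem isLocAlmostIsoIso_ultralimit [ProperSpace X] [ContinuousMul X]
    (h : ∀ᶠ i in U, IsLocAlmostIsoIso (σ i) (τ i) η R) {r : ℝ} (hr : r < R) :
    IsLocAlmostIsoIso (fun g => ofSeq fun i => σ i g : X → MetricUltraproduct G U)
      (fun c => limUnder U fun i => τ i (out c i)) η r := by
  have hR {x : X} (hx : x ∈ closedBall 1 r) := closedBall_subset_closedBall hr.le hx
  have hmem {x : X} (hx : x ∈ closedBall 1 r) := map_mem_boundedSubgroup h (hR hx)
  refine ⟨?_, ?_, fun g hg g' hg' c hc => ?_, fun c hc c' hc' g hg => ?_⟩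
  · have h1 : ∀ᶠ i in U, σ i 1 = 1 := h.mono fun i hi => hi.1
    have h1_mem : (fun i => σ i 1) ∈ boundedSubgroup G U :=
      ⟨0, h1.mono fun i hi => by simp [hi]⟩
    have h2 := tendsto_dist_ofSeq (U := U) h1_mem (one_mem _)
    rw [ofSeq_one] at h2
    exact dist_eq_zero.1 <| tendsto_nhds_unique h2 <|
      tendsto_const_nhds.congr' (h1.mono fun i hi => by simp [hi])
  · refine (tendsto_const_nhds.congr' (h.mono fun i hi => ?_)).limUnder_eq
    simp [out_one, hi.2.1]
  · have h1 := tendsto_dist_ofSeq (mul_mem (hmem hg) (hmem hg')) (out_mem c)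
    rw [ofSeq_mul (hmem hg) (hmem hg'), ofSeq_out] at h1
    refine le_of_tendsto
      (h1.sub (tendsto_const_nhds.dist (tendsto_limUnder_map_out h hc hr))).abs ?_
    filter_upwards [h, eventually_out_mem_closedBall hc hr] with i hi hci
    exact hi.2.2.1 g (hR hg) g' (hR hg') _ hci
  · have h2 := tendsto_dist_ofSeq (mul_mem (out_mem c) (out_mem c')) (hmem hg)
    rw [ofSeq_mul (out_mem c) (out_mem c'), ofSeq_out, ofSeq_out] at h2
    refine le_of_tendsto
      ((((tendsto_limUnder_map_out h hc hr).mul (tendsto_limUnder_map_out h hc' hr)).dist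
        tendsto_const_nhds).sub h2).abs ?_
    filter_upwards [h, eventually_out_mem_closedBall hc hr, eventually_out_mem_closedBall hc' hr]
      with i hi hci hci'
    exact hi.2.2.2 _ hci _ hci' g (hR hg)

theorem exists_isLocAlmostIsoIso_metricUltraproduct [ProperSpace X] [ContinuousMul X] {r : ℝ}
    (hη : η ≤ √2 / 2) (hr : r < 1 / η) (h : ∀ᶠ i in U, Upsilon X (G i) < η) :
    ∃ (ς : X → MetricUltraproduct G U) (κ : MetricUltraproduct G U → X),
      IsLocAlmostIsoIso ς κ η r := by
  have (i : ι) : ∃ (σ : X → G i) (τ : G i → X),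
      Upsilon X (G i) < η → IsLocAlmostIsoIso σ τ η (1 / η) := by
    by_cases hi : Upsilon X (G i) < η
    · obtain ⟨σ, τ, hστ⟩ := exists_isLocAlmostIsoIso_of_upsilon_lt hη hi
      exact ⟨σ, τ, fun _ => hστ⟩
    · exact ⟨1, 1, fun h => absurd h hi⟩
  choose σ τ hστ using this
  exact ⟨_, _, isLocAlmostIsoIso_ultralimit (h.mono hστ) hr⟩

end Ultralimit

section Cauchy

variable {G : ℕ → Type*} [∀ n, Group (G n)] [∀ n, MetricSpace (G n)] [∀ n, ProperSpace (G n)]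
  [∀ n, IsIsometricSMul (G n) (G n)] [∀ n, IsIsometricSMul (G n)ᵐᵒᵖ (G n)] {U : Ultrafilter ℕ}

theorem eventually_exists_isLocAlmostIsoIso_metricUltraproduct (hU : (U : Filter ℕ) ≤ atTop)
    (h_cauchy : ∀ ε : ℝ, 0 < ε → ∃ N : ℕ, ∀ m, N ≤ m → ∀ n, N ≤ n → Upsilon (G m) (G n) < ε)
    {η r : ℝ} (hη : 0 < η) (hη' : η ≤ √2 / 2) (hr : r < 1 / η) :
    ∀ᶠ n in atTop, ∃ (ς : G n → MetricUltraproduct G U) (κ : MetricUltraproduct G U → G n),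
      IsLocAlmostIsoIso ς κ η r := by
  obtain ⟨N, hN⟩ := h_cauchy η hη
  filter_upwards [eventually_ge_atTop N] with n hn
  exact exists_isLocAlmostIsoIso_metricUltraproduct hη' hr
    (Eventually.filter_mono hU ((eventually_ge_atTop N).mono fun m hm => hN n hn m hm))

theorem properSpace_metricUltraproduct (hU : (U : Filter ℕ) ≤ atTop)
    (h_cauchy : ∀ ε : ℝ, 0 < ε → ∃ N : ℕ, ∀ m, N ≤ m → ∀ n, N ≤ n → Upsilon (G m) (G n) < ε) :
    ProperSpace (MetricUltraproduct G U) := by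
  have := BddSeq.completeSpace (G := G) (tendsto_id'.2 hU)
  refine .of_totallyBounded_closedBall_one fun r hr => totallyBounded_iff.2 fun ε hε => ?_
  set η := min (min (ε / 3) (1 / (r + 2))) (√2 / 2)
  have hη : 0 < η := by positivity
  have hηr : η ≤ 1 / (r + 2) := (min_le_left _ _).trans (min_le_right _ _)
  have hη1 : η ≤ 1 := hηr.trans (by rw [div_le_one (by positivity)]; linarith)
  have hr' : r + 1 < 1 / η := by linarith [(le_one_div hη (by positivity)).1 hηr]
  obtain ⟨n, ς, κ, h⟩ := (eventually_exists_isLocAlmostIsoIso_metricUltraproduct hU h_cauchy hη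
    (min_le_right _ _) hr').exists
  obtain ⟨t, ht, hcover⟩ := h.exists_finite_cover hη (by linarith : r + η ≤ r + 1)
  refine ⟨t, ht, hcover.trans <| Set.iUnion₂_mono fun _ _ => ball_subset_ball ?_⟩
  have : η ≤ ε / 3 := (min_le_left _ _).trans (min_le_left _ _)
  linarith

theorem tendsto_upsilon_metricUltraproduct (hU : (U : Filter ℕ) ≤ atTop)
    (h_cauchy : ∀ ε : ℝ, 0 < ε → ∃ N : ℕ, ∀ m, N ≤ m → ∀ n, N ≤ n → Upsilon (G m) (G n) < ε) :
    Tendsto (fun n => Upsilon (G n) (MetricUltraproduct G U)) atTop (𝓝 0) := by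
  refine tendsto_order.2 ⟨fun a ha => .of_forall fun n => ha.trans_le upsilon_nonneg,
    fun ε hε => ?_⟩
  set η := min (ε / 4) (√2 / 2)
  have hη : 0 < η := by positivity
  filter_upwards [eventually_exists_isLocAlmostIsoIso_metricUltraproduct hU h_cauchy hη
    (min_le_right _ _) (one_div_lt_one_div_of_lt hη (by linarith : η < 2 * η))] with n ⟨ς, κ, h⟩
  calc Upsilon (G n) (MetricUltraproduct G U) ≤ 2 * η :=
        upsilon_le_of_isLocAlmostIsoIso (by positivity) (h.mono (by linarith) le_rfl)
    _ < ε := by linarith [min_le_left (ε / 4) (√2 / 2)]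

end Cauchy

theorem upsilon_cauchy_biinvariant_groups_convergence_general
    (G : ℕ → Type) [∀ n, Group (G n)] [∀ n, MetricSpace (G n)]
    (h_left : ∀ n, ∀ g h k : G n, dist (g * h) (g * k) = dist h k)
    (h_right : ∀ n, ∀ g h k : G n, dist (h * g) (k * g) = dist h k)
    (h_proper : ∀ n, ProperSpace (G n))
    (h_cauchy : ∀ ε : ℝ, 0 < ε → ∃ N : ℕ, ∀ m, N ≤ m → ∀ n, N ≤ n →
      Upsilon (G m) (G n) < ε) :
    ∃ (H : Type) (_ : Group H) (_ : MetricSpace H),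
      (∀ g h k : H, dist (g * h) (g * k) = dist h k) ∧
      (Continuous fun p : H × H => p.1 * p.2) ∧
      (Continuous fun g : H => g⁻¹) ∧
      ProperSpace H ∧
      Filter.Tendsto (fun n => Upsilon (G n) H) Filter.atTop (nhds 0) := by
  have (n : ℕ) : IsIsometricSMul (G n) (G n) := ⟨fun g => .of_dist_eq (h_left n g)⟩
  have (n : ℕ) : IsIsometricSMul (G n)ᵐᵒᵖ (G n) :=
    ⟨fun g => .of_dist_eq fun x y => h_right n g.unop x y⟩
  have hU := Nat.hyperfilter_le_atTop
  exact ⟨MetricUltraproduct G (hyperfilter ℕ), inferInstance, inferInstance, dist_mul_left,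
    continuous_mul, continuous_inv, properSpace_metricUltraproduct hU h_cauchy,
    tendsto_upsilon_metricUltraproduct hU h_cauchy⟩

/-- A Cauchy sequence, for the Gromov-Hausdorff monoid distance
`Υ`, of proper metric groups with bi-invariant metrics converges for `Υ` to some
proper metric group. -/
theorem upsilon_cauchy_biinvariant_groups_convergence
    (G : ℕ → Type) [∀ n, Group (G n)] [∀ n, MetricSpace (G n)]
    (h_left : ∀ n, ∀ g h k : G n, dist (g * h) (g * k) = dist h k)
    (h_right : ∀ n, ∀ g h k : G n, dist (h * g) (k * g) = dist h k)
    (h_cont : ∀ n, Continuous fun p : G n × G n => p.1 * p.2)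
    (h_inv : ∀ n, Continuous fun g : G n => g⁻¹)
    (h_proper : ∀ n, ProperSpace (G n))
    (h_cauchy : ∀ ε : ℝ, 0 < ε → ∃ N : ℕ, ∀ m, N ≤ m → ∀ n, N ≤ n →
      Upsilon (G m) (G n) < ε) :
    ∃ (H : Type) (_ : Group H) (_ : MetricSpace H),
      (∀ g h k : H, dist (g * h) (g * k) = dist h k) ∧
      (Continuous fun p : H × H => p.1 * p.2) ∧
      (Continuous fun g : H => g⁻¹) ∧
      ProperSpace H ∧
      Filter.Tendsto (fun n => Upsilon (G n) H) Filter.atTop (nhds 0) :=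
  upsilon_cauchy_biinvariant_groups_convergence_general G h_left h_right h_proper h_cauchy
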